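/- For every θ ∈ (0, π/2], let 𝔄_θ = { r·e^{it} ∈ ℂ : 0 < t < θ, 0 < r < sin(θ−t)/sin θ } be the plane region bounded by the segment [0,1] and the circular arc α(t) = (sin(θ−t)/sin θ)·e^{it}, t ∈ [0,θ]. Then ∬_{𝔄_θ} 4/(1+|z|²)² dm(z) = 2θ − sin θ · ζ₀(sin θ), where m is Lebesgue measure on ℂ. Equivalently, the spherical area of 𝔄_θ equals ζ₁(sin θ), where ζ₁(τ) = 2·arcsin τ − τ·ζ₀(τ). -/

import Mathlib

/-!
In polar coordinates `𝔄_θ` is `{0 < t < θ, 0 < r < R(t)}` with `R(t) = sin(θ - t) / sin θ`, and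
the radial integral of `4r / (1 + r²)²` up to `R` is `2R² / (1 + R²)`. With `c = sin θ` and the
substitution `s = θ - t`, this leaves `2θ - 2c² ∫₀^θ ds / (c² + sin² s)`, and
`-arctan (c cot s / √(1 + c²)) / (c √(1 + c²))` is an antiderivative of the last integrand on
`(0, π)`. It tends to `-π / (2c√(1 + c²))` as `s → 0⁺` and at `s = θ` its argument is
`cos θ / √(1 + c²) = √(1 - c²) / √(1 + c²)`, which is exactly the arctangent in `ζ₀(c)`.
-/

open Real Set MeasureTheory

/-- The function `ζ₀(τ)` of the paper. -/
noncomputable def zeta0 (τ : ℝ) : ℝ :=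
  2 / Real.sqrt (1 + τ^2) *
    (π/2 - Real.arctan (Real.sqrt (1 - τ^2) / Real.sqrt (1 + τ^2)))

/-- The function `ζ₁(τ) = 2 arcsin τ − τ ζ₀(τ)` of the paper. -/
noncomputable def zeta1 (τ : ℝ) : ℝ := 2 * Real.arcsin τ - τ * zeta0 τ

/-- The plane region `𝔄_θ` bounded by the segment `[0,1]` and the circular arc
`α(t) = (sin(θ−t)/sin θ)·e^{it}`, `t ∈ [0,θ]`. -/
def lensRegion (θ : ℝ) : Set ℂ :=
  {z : ℂ | ∃ t r : ℝ, 0 < t ∧ t < θ ∧ 0 < r ∧ r < Real.sin (θ - t) / Real.sin θ ∧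
    z = (r : ℂ) * Complex.exp (t * Complex.I)}

open Filter Topology

theorem Complex.measurable_polarCoord : Measurable Complex.polarCoord := by
  simpa only [funext Complex.polarCoord_apply] using measurable_norm.prodMk Complex.measurable_arg

theorem Complex.setIntegral_image_polarCoord_symm {E : Type*} [NormedAddCommGroup E]
    [NormedSpace ℝ E] {S : Set (ℝ × ℝ)} (hS : MeasurableSet S)
    (hST : S ⊆ Complex.polarCoord.target) (g : ℂ → E) :
    ∫ z in Complex.polarCoord.symm '' S, g z = ∫ p in S, p.1 • g (Complex.polarCoord.symm p) := by
  have hmeas : MeasurableSet (Complex.polarCoord.symm '' S) := by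
    rw [Complex.polarCoord.symm_image_eq_source_inter_preimage hST]
    exact Complex.polarCoord.open_source.measurableSet.inter
      (Complex.measurable_polarCoord hS)
  calc ∫ z in Complex.polarCoord.symm '' S, g z
      = ∫ p in Complex.polarCoord.target,
          p.1 • (Complex.polarCoord.symm '' S).indicator g (Complex.polarCoord.symm p) := by
        rw [← integral_indicator hmeas]
        exact (Complex.integral_comp_polarCoord_symm _).symm
    _ = ∫ p in Complex.polarCoord.target,
          S.indicator (fun p ↦ p.1 • g (Complex.polarCoord.symm p)) p := by
        refine setIntegral_congr_fun Complex.polarCoord.open_target.measurableSet fun p hp ↦ ?_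
        have hmem := Complex.polarCoord.symm.injOn.mem_image_iff hST hp
        by_cases hpS : p ∈ S
        · rw [indicator_of_mem hpS, indicator_of_mem (hmem.2 hpS)]
        · rw [indicator_of_notMem hpS, indicator_of_notMem (mt hmem.1 hpS), smul_zero]
    _ = ∫ p in S, p.1 • g (Complex.polarCoord.symm p) := by
        rw [setIntegral_indicator hS, Set.inter_eq_right.mpr hST]

theorem setIntegral_regionBetween {α E : Type*} [MeasurableSpace α] {μ : Measure α} [SFinite μ]
    [NormedAddCommGroup E] [NormedSpace ℝ E] {f g : α → ℝ} {s : Set α} (hf : Measurable f)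
    (hg : Measurable g) (hs : MeasurableSet s) {F : α × ℝ → E}
    (hF : IntegrableOn F (regionBetween f g s) (μ.prod volume)) :
    ∫ p in regionBetween f g s, F p ∂μ.prod volume =
      ∫ x in s, (∫ y in Ioo (f x) (g x), F (x, y)) ∂μ := by
  have hA := measurableSet_regionBetween hf hg hs
  rw [← integral_indicator hA, integral_prod _ (hF.integrable_indicator hA),
    ← integral_indicator hs]
  congr 1 with x
  by_cases hx : x ∈ s
  · rw [indicator_of_mem hx, ← integral_indicator measurableSet_Ioo]
    congr 1 with y
    simp [regionBetween, Set.indicator, hx]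
  · rw [indicator_of_notMem hx]
    simp [regionBetween, Set.indicator, hx]

/-- The region `{r e^{it} : a < t < b, 0 < r < R t}`. -/
def polarRegion (a b : ℝ) (R : ℝ → ℝ) : Set ℂ :=
  Complex.polarCoord.symm '' (Prod.swap ⁻¹' regionBetween 0 R (Ioo a b))

theorem setIntegral_polarRegion_comp_norm {a b : ℝ} (ha : -π ≤ a) (hb : b ≤ π) {R : ℝ → ℝ}
    (hR : Measurable R) {h : ℝ → ℝ} (hh : IntegrableOn (fun r ↦ r * h r) (Ioi 0)) :
    ∫ z in polarRegion a b R, h ‖z‖ = ∫ t in Ioo a b, ∫ r in Ioo 0 (R t), r * h r := by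
  set A := regionBetween 0 R (Ioo a b)
  have hA : MeasurableSet A := measurableSet_regionBetween measurable_const hR measurableSet_Ioo
  have hA_sub : A ⊆ Ioo a b ×ˢ Ioi 0 := fun q hq ↦ ⟨hq.1, hq.2.1⟩
  have hswap_sub : Prod.swap ⁻¹' A ⊆ Complex.polarCoord.target := by
    rintro ⟨r, t⟩ ⟨⟨hat, htb⟩, hr, -⟩
    dsimp only [Prod.swap_prod_mk] at hat htb hr
    exact ⟨hr, show -π < t by linarith, show t < π by linarith⟩
  have hint : IntegrableOn (fun q : ℝ × ℝ ↦ q.2 * h q.2) A (volume.prod volume) := by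
    have hprod := (integrableOn_const (s := Ioo a b) (C := (1 : ℝ))
      (measure_Ioo_lt_top (μ := volume)).ne).mul_prod hh
    rw [Measure.prod_restrict] at hprod
    simp only [one_mul] at hprod
    exact IntegrableOn.mono_set hprod hA_sub
  calc ∫ z in polarRegion a b R, h ‖z‖
      = ∫ p in Prod.swap ⁻¹' A, p.1 • h ‖Complex.polarCoord.symm p‖ :=
        Complex.setIntegral_image_polarCoord_symm (measurable_swap hA) hswap_sub _
    _ = ∫ p in Prod.swap ⁻¹' A, (Prod.swap p).2 * h (Prod.swap p).2 := by
        refine setIntegral_congr_fun (measurable_swap hA) fun p hp ↦ ?_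
        have hr : 0 < p.1 := hp.2.1
        rw [Complex.norm_polarCoord_symm, abs_of_pos hr, smul_eq_mul, Prod.snd_swap]
    _ = ∫ q in A, q.2 * h q.2 ∂volume.prod volume := by
        rw [Measure.volume_eq_prod]
        exact Measure.measurePreserving_swap.setIntegral_preimage_emb
          MeasurableEquiv.prodComm.measurableEmbedding (fun q : ℝ × ℝ ↦ q.2 * h q.2) A
    _ = ∫ t in Ioo a b, ∫ r in Ioo 0 (R t), r * h r :=
        setIntegral_regionBetween measurable_const hR measurableSet_Ioo hint

noncomputable def lensRadius (θ t : ℝ) : ℝ := sin (θ - t) / sin θ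

theorem lensRadius_nonneg {θ t : ℝ} (hθ : θ ≤ π) (ht : t ∈ Ioo 0 θ) : 0 ≤ lensRadius θ t :=
  div_nonneg (sin_nonneg_of_nonneg_of_le_pi (by linarith [ht.2]) (by linarith [ht.1]))
    (sin_nonneg_of_nonneg_of_le_pi (by linarith [ht.1, ht.2]) hθ)

theorem lensRegion_eq_polarRegion (θ : ℝ) :
    lensRegion θ = polarRegion 0 θ (lensRadius θ) := by
  ext z
  have hpolar (r t : ℝ) : Complex.polarCoord.symm (r, t) = r * Complex.exp (t * Complex.I) := by
    rw [Complex.polarCoord_symm_apply, Complex.exp_mul_I, ← Complex.ofReal_cos,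
      ← Complex.ofReal_sin]
  constructor
  · rintro ⟨t, r, ht0, htθ, hr0, hrR, rfl⟩
    exact ⟨(r, t), ⟨⟨ht0, htθ⟩, hr0, hrR⟩, hpolar r t⟩
  · rintro ⟨⟨r, t⟩, ⟨⟨ht0, htθ⟩, hr0, hrR⟩, rfl⟩
    exact ⟨t, r, ht0, htθ, hr0, hrR, hpolar r t⟩

theorem hasDerivAt_neg_two_div_one_add_sq (r : ℝ) :
    HasDerivAt (fun r : ℝ ↦ -(2 / (1 + r ^ 2))) (r * (4 / (1 + r ^ 2) ^ 2)) r := by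
  have hne : 1 + r ^ 2 ≠ 0 := by positivity
  refine (((hasDerivAt_const r 2).div ((hasDerivAt_pow 2 r).const_add 1) hne).neg).congr_deriv ?_
  field_simp
  ring

theorem integrableOn_Ioi_mul_four_div_one_add_sq_sq :
    IntegrableOn (fun r : ℝ ↦ r * (4 / (1 + r ^ 2) ^ 2)) (Ioi 0) := by
  refine integrableOn_Ioi_deriv_of_nonneg' (fun r _ ↦ hasDerivAt_neg_two_div_one_add_sq r)
    (fun r (hr : 0 < r) ↦ by positivity) (l := 0) ?_
  simpa only [neg_zero] using ((tendsto_const_nhds (x := (2 : ℝ))).div_atTop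
    (tendsto_atTop_add_const_left _ 1 (tendsto_pow_atTop two_ne_zero))).neg

theorem integral_Ioo_mul_four_div_one_add_sq_sq {R : ℝ} (hR : 0 ≤ R) :
    ∫ r in Ioo 0 R, r * (4 / (1 + r ^ 2) ^ 2) = 2 * R ^ 2 / (1 + R ^ 2) := by
  rw [← integral_Ioc_eq_integral_Ioo, ← intervalIntegral.integral_of_le hR,
    intervalIntegral.integral_eq_sub_of_hasDerivAt (fun r _ ↦ hasDerivAt_neg_two_div_one_add_sq r)
      (Continuous.intervalIntegrable (by fun_prop (disch := intro; positivity)) _ _)]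
  field_simp
  ring

theorem tendsto_cos_div_sin_nhdsGT_zero : Tendsto (fun s ↦ cos s / sin s) (𝓝[>] 0) atTop := by
  have hsin : Tendsto sin (𝓝[>] 0) (𝓝[>] 0) := by
    refine tendsto_nhdsWithin_of_tendsto_nhds_of_eventually_within _ ?_ ?_
    · simpa only [sin_zero] using continuous_sin.continuousWithinAt.tendsto (s := Ioi 0) (x := 0)
    · filter_upwards [Ioo_mem_nhdsGT pi_pos] with s hs using sin_pos_of_pos_of_lt_pi hs.1 hs.2
  have hcos : Tendsto cos (𝓝[>] 0) (𝓝 1) := by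
    simpa only [cos_zero] using continuous_cos.continuousWithinAt.tendsto (s := Ioi 0) (x := 0)
  simpa only [div_eq_mul_inv, Pi.inv_apply] using
    hcos.pos_mul_atTop one_pos hsin.inv_tendsto_nhdsGT_zero

theorem hasDerivAt_arctan_mul_cos_div_sin (k : ℝ) {s : ℝ} (hs : sin s ≠ 0) :
    HasDerivAt (fun s ↦ arctan (k * (cos s / sin s)))
      (-k / (sin s ^ 2 + k ^ 2 * cos s ^ 2)) s := by
  refine ((((hasDerivAt_cos s).div (hasDerivAt_sin s) hs).const_mul k).arctan).congr_deriv ?_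
  have hden : sin s ^ 2 + k ^ 2 * cos s ^ 2 ≠ 0 := by positivity
  simp only [Pi.div_apply]
  field_simp
  linear_combination (-k) * sin_sq_add_cos_sq s

theorem integral_inv_sq_add_sin_sq {c θ : ℝ} (hc : 0 < c) (hθ₀ : 0 < θ) (hθπ : θ < π) :
    ∫ s in 0..θ, (c ^ 2 + sin s ^ 2)⁻¹
      = (π / 2 - arctan (c / √(1 + c ^ 2) * (cos θ / sin θ))) / (c * √(1 + c ^ 2)) := by
  set q := √(1 + c ^ 2)
  have hq : 0 < q := by positivity
  have hq2 : q ^ 2 = 1 + c ^ 2 := sq_sqrt (by positivity)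
  -- `cot` rather than `tan`: this antiderivative stays continuous up to `θ = π / 2`.
  set G : ℝ → ℝ := fun s ↦ -arctan (c / q * (cos s / sin s)) / (c * q)
  have hG : ∀ s, sin s ≠ 0 → HasDerivAt G (c ^ 2 + sin s ^ 2)⁻¹ s := by
    intro s hs
    refine ((hasDerivAt_arctan_mul_cos_div_sin (c / q) hs).neg.div_const (c * q)).congr_deriv ?_
    have hden : sin s ^ 2 + (c / q) ^ 2 * cos s ^ 2 ≠ 0 := by positivity
    field_simp
    linear_combination (-c ^ 2) * sin_sq_add_cos_sq s - sin s ^ 2 * hq2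
  have hsin_ne : ∀ s ∈ Ioo 0 π, sin s ≠ 0 := fun s hs ↦ (sin_pos_of_mem_Ioo hs).ne'
  have hG₀ : Tendsto G (𝓝[>] 0) (𝓝 (-(π / 2) / (c * q))) :=
    ((tendsto_arctan_atTop.mono_right nhdsWithin_le_nhds).comp
      (tendsto_cos_div_sin_nhdsGT_zero.const_mul_atTop (by positivity))).neg.div_const _
  have hGθ : Tendsto G (𝓝[<] θ) (𝓝 (G θ)) :=
    (hG θ (hsin_ne θ ⟨hθ₀, hθπ⟩)).continuousAt.tendsto.mono_left nhdsWithin_le_nhds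
  rw [intervalIntegral.integral_eq_sub_of_hasDerivAt_of_tendsto hθ₀
    (fun s hs ↦ hG s (hsin_ne s ⟨hs.1, hs.2.trans hθπ⟩))
    (Continuous.intervalIntegrable (by fun_prop (disch := intro; positivity)) _ _) hG₀ hGθ]
  ring

theorem integral_lensRadius {θ : ℝ} (hθ₀ : 0 < θ) (hθ : θ ≤ π / 2) :
    ∫ t in Ioo 0 θ, 2 * lensRadius θ t ^ 2 / (1 + lensRadius θ t ^ 2)
      = 2 * θ - sin θ * zeta0 (sin θ) := by
  have hsin : 0 < sin θ := sin_pos_of_pos_of_lt_pi hθ₀ (by linarith [pi_pos])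
  have hprofile (t : ℝ) : 2 * lensRadius θ t ^ 2 / (1 + lensRadius θ t ^ 2)
      = 2 - 2 * sin θ ^ 2 * (sin θ ^ 2 + sin (θ - t) ^ 2)⁻¹ := by
    rw [lensRadius]
    field_simp
    ring
  have harctan_arg : sin θ / √(1 + sin θ ^ 2) * (cos θ / sin θ)
      = √(1 - sin θ ^ 2) / √(1 + sin θ ^ 2) := by
    rw [cos_eq_sqrt_one_sub_sin_sq (by linarith [pi_pos]) hθ]
    field_simp
  rw [← integral_Ioc_eq_integral_Ioo, ← intervalIntegral.integral_of_le hθ₀.le]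
  simp_rw [hprofile]
  rw [intervalIntegral.integral_comp_sub_left
      (fun s ↦ 2 - 2 * sin θ ^ 2 * (sin θ ^ 2 + sin s ^ 2)⁻¹) θ,
    sub_self, sub_zero, intervalIntegral.integral_sub intervalIntegrable_const
      (Continuous.intervalIntegrable (by fun_prop (disch := intro; positivity)) _ _),
    intervalIntegral.integral_const, intervalIntegral.integral_const_mul,
    integral_inv_sq_add_sin_sq hsin hθ₀ (by linarith [pi_pos]), harctan_arg, zeta0]
  field_simp
  ring

theorem lens_spherical_area (θ : ℝ) (hθ : θ ∈ Set.Ioc (0:ℝ) (π/2)) :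
    (∫ z in lensRegion θ, 4 / (1 + ‖z‖^2)^2)
      = 2 * θ - Real.sin θ * zeta0 (Real.sin θ) ∧
    (∫ z in lensRegion θ, 4 / (1 + ‖z‖^2)^2) = zeta1 (Real.sin θ) := by
  obtain ⟨hθ₀, hθ⟩ := hθ
  have harea : ∫ z in lensRegion θ, 4 / (1 + ‖z‖ ^ 2) ^ 2 = 2 * θ - sin θ * zeta0 (sin θ) := by
    rw [lensRegion_eq_polarRegion,
      setIntegral_polarRegion_comp_norm (h := fun r ↦ 4 / (1 + r ^ 2) ^ 2)
        (by linarith [pi_pos]) (by linarith [pi_pos]) (by unfold lensRadius; fun_prop)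
        integrableOn_Ioi_mul_four_div_one_add_sq_sq,
      ← integral_lensRadius hθ₀ hθ]
    exact setIntegral_congr_fun measurableSet_Ioo fun t ht ↦
      integral_Ioo_mul_four_div_one_add_sq_sq (lensRadius_nonneg (by linarith [pi_pos]) ht)
  exact ⟨harea, by rw [harea, zeta1, arcsin_sin (by linarith [pi_pos]) hθ]⟩
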